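/- Let A be a commutative ring and L a Gabriel filter on A. If M and N are totally σ-artinian A-modules, then the direct sum M ⊕ N is a totally σ-artinian A-module. -/

import Mathlib

/-- A Gabriel filter on a commutative ring `A`: a set of ideals containing `⊤`,
upward closed, closed under intersections, and satisfying the Gabriel condition. -/
structure IsGabrielFilter {A : Type*} [CommRing A] (L : Set (Ideal A)) : Prop where
  top_mem : ⊤ ∈ L
  mem_of_le : ∀ {a b : Ideal A}, a ∈ L → a ≤ b → b ∈ L
  inf_mem : ∀ {a b : Ideal A}, a ∈ L → b ∈ L → a ⊓ b ∈ L
  gabriel : ∀ b : Ideal A,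
    (∃ a ∈ L, ∀ x ∈ a, Submodule.colon b (Ideal.span {x}) ∈ L) → b ∈ L

/-- An `A`-module `M` is totally σ-artinian w.r.t. `L` if every decreasing chain
of submodules `N₁ ⊇ N₂ ⊇ ⋯` admits `m` and `h ∈ L` with `Nₘ·h ⊆ Nₛ` for all `s ≥ m`. -/
def TotallySigmaArtinian {A : Type*} [CommRing A] (L : Set (Ideal A))
    (M : Type*) [AddCommGroup M] [Module A M] : Prop :=
  ∀ N : ℕ → Submodule A M, Antitone N →
    ∃ m : ℕ, ∃ h ∈ L, ∀ s : ℕ, m ≤ s → h • N m ≤ N s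

/-!
Totally σ-artinian modules are closed under extensions, and `N → M × N → M` is exact.
Given `M' →g M →f M''` exact and a chain `P` in `M`, push it forward along `f` and pull it
back along `g`. If `a` stabilises the image chain from `m₁` on and `b` stabilises the
preimage chain from `m₂` on, then for `n = max m₁ m₂` multiplying `P n` by `a` lands in
`P s + g(g⁻¹ (P n))`, and multiplying further by `b` lands in `P s`. The Gabriel condition
is what puts `a * b` back in the filter.
-/

lemma IsGabrielFilter.mul_mem {A : Type*} [CommRing A] {L : Set (Ideal A)}
    (hL : IsGabrielFilter L) {a b : Ideal A} (ha : a ∈ L) (hb : b ∈ L) :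
    a * b ∈ L := by
  refine hL.gabriel _ ⟨a, ha, fun x hx => hL.mem_of_le hb fun r hr => ?_⟩
  rw [Ideal.mem_colon_span_singleton, mul_comm r x]
  exact Ideal.mul_mem_mul hx hr

section Exact

variable {A M' M M'' : Type*} [CommRing A] [AddCommGroup M'] [Module A M']
  [AddCommGroup M] [Module A M] [AddCommGroup M''] [Module A M'']
  {g : M' →ₗ[A] M} {f : M →ₗ[A] M''}

lemma Submodule.smul_le_sup_map_comap_of_exact (hgf : Function.Exact g f)
    {P P' : Submodule A M} (hP : P' ≤ P) {a : Ideal A} (ha : a • P.map f ≤ P'.map f) :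
    a • P ≤ P' ⊔ (P.comap g).map g := by
  rw [Submodule.smul_le]
  intro r hr x hx
  obtain ⟨y, hy, hfy⟩ := ha (Submodule.smul_mem_smul hr (Submodule.mem_map_of_mem hx))
  obtain ⟨z, hz⟩ := (hgf (r • x - y)).mp (by simp [hfy])
  have hzP : g z ∈ P := hz ▸ sub_mem (P.smul_mem r hx) (hP hy)
  exact Submodule.mem_sup.mpr ⟨y, hy, g z, ⟨z, hzP, rfl⟩, by rw [hz, add_sub_cancel]⟩

lemma Submodule.mul_smul_le_of_exact (hgf : Function.Exact g f)
    {P P' : Submodule A M} (hP : P' ≤ P) {a b : Ideal A}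
    (ha : a • P.map f ≤ P'.map f) (hb : b • P.comap g ≤ P'.comap g) :
    (a * b) • P ≤ P' :=
  calc (a * b) • P = b • a • P := by rw [mul_comm, Submodule.mul_smul]
    _ ≤ b • (P' ⊔ (P.comap g).map g) :=
      Submodule.smul_mono le_rfl (smul_le_sup_map_comap_of_exact hgf hP ha)
    _ = b • P' ⊔ (b • P.comap g).map g := by rw [Submodule.smul_sup, Submodule.map_smul'']
    _ ≤ P' ⊔ (P'.comap g).map g :=
      sup_le_sup Submodule.smul_le_right (Submodule.map_mono hb)
    _ = P' := sup_eq_left.mpr (Submodule.map_comap_le g P')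

theorem TotallySigmaArtinian.of_exact {L : Set (Ideal A)} (hL : IsGabrielFilter L)
    (hgf : Function.Exact g f) (hM' : TotallySigmaArtinian L M')
    (hM'' : TotallySigmaArtinian L M'') : TotallySigmaArtinian L M := by
  intro P hP
  obtain ⟨m₁, a, ha, Ha⟩ :=
    hM'' (fun n => (P n).map f) fun i j hij => Submodule.map_mono (hP hij)
  obtain ⟨m₂, b, hb, Hb⟩ :=
    hM' (fun n => (P n).comap g) fun i j hij => Submodule.comap_mono (hP hij)
  refine ⟨max m₁ m₂, a * b, hL.mul_mem ha hb, fun s hs =>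
    Submodule.mul_smul_le_of_exact hgf (hP hs) ?_ ?_⟩
  · exact (Submodule.smul_mono le_rfl (Submodule.map_mono (hP (le_max_left m₁ m₂)))).trans
      (Ha s (le_of_max_le_left hs))
  · exact (Submodule.smul_mono le_rfl (Submodule.comap_mono (hP (le_max_right m₁ m₂)))).trans
      (Hb s (le_of_max_le_right hs))

end Exact

theorem totallySigmaArtinian_prod
    {A : Type*} [CommRing A] (L : Set (Ideal A)) (hL : IsGabrielFilter L)
    (M N : Type*) [AddCommGroup M] [Module A M] [AddCommGroup N] [Module A N]
    (hM : TotallySigmaArtinian L M) (hN : TotallySigmaArtinian L N) :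
    TotallySigmaArtinian L (M × N) :=
  TotallySigmaArtinian.of_exact hL Function.Exact.inr_fst hN hM
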